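/- Let (ζ^E_l, m^E_l)_{l≥1} be the EDF trace and (ζ_l, m_l)_{l≥1} be any work-conserving schedule trace with the same initial state, ζ_1 = ζ^E_1. Then for every interval l ≥ 1, the number of packets delivered by EDF in interval l is at least that delivered by the other policy: ∑_{i=1}^{K} m_l(i) ≤ ∑_{i=1}^{K} m^E_l(i). -/
import Mathlib


open Finset

/-- A work-conserving schedule trace for the homogeneous interval model:
`ζ l k` is the number of buffered packets at the start of interval `l` that expire in
`k` intervals, `m l k` the number of such packets delivered during interval `l`,
`j l` the number of successful transmissions in interval `l`, all deadlines in
`{1,…,K}`, and `N` new packets (with deadline `K` intervals away) arrive at the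
start of each interval. -/
def WorkConserving (K N : ℕ) (j : ℕ → ℕ) (ζ : ℕ → ℕ → ℕ) (m : ℕ → ℕ → ℕ) : Prop :=
  (∀ l, 1 ≤ l → ∀ i ∈ Icc 1 K, m l i ≤ ζ l i) ∧
  (∀ l, 1 ≤ l → ∑ i ∈ Icc 1 K, m l i = min (j l) (∑ i ∈ Icc 1 K, ζ l i)) ∧
  (∀ l, 1 ≤ l → ∀ k, 1 ≤ k → k ≤ K - 1 → ζ (l + 1) k = ζ l (k + 1) - m l (k + 1)) ∧
  (∀ l, 1 ≤ l → ζ (l + 1) K = N)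

/-- The Earliest Deadline First deliveries: in each interval, packets are served in
increasing order of deadline, so a packet with deadline `i` intervals away is served
only after all packets with closer deadlines. -/
def IsEDF (K : ℕ) (j : ℕ → ℕ) (ζ : ℕ → ℕ → ℕ) (m : ℕ → ℕ → ℕ) : Prop :=
  ∀ l, 1 ≤ l → ∀ i ∈ Icc 1 K,
    m l i = min (ζ l i) (j l - ∑ i' ∈ Icc 1 (i - 1), ζ l i')

lemma Ioc_shift_aux (K k : ℕ) (hK : 1 ≤ K) (f : ℕ → ℕ) :
    ∑ i ∈ Ioc k (K - 1), f (i + 1) = ∑ i ∈ Ioc (k + 1) K, f i := by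
  rw [show Ioc (k + 1) K = (Ioc k (K - 1)).map (addRightEmbedding 1) by
    rw [Finset.map_add_right_Ioc]; congr 1; omega]
  rw [Finset.sum_map]
  rfl

lemma Icc_one_eq_Ioc_zero (n : ℕ) : Icc 1 n = Ioc 0 n := by
  ext x; simp; omega

/-- Suffix-sum recursion for any work-conserving trace. -/
lemma wc_suffix_rec (K N : ℕ) (hK : 1 ≤ K) (j : ℕ → ℕ) (ζ m : ℕ → ℕ → ℕ)
    (h : WorkConserving K N j ζ m) (l k : ℕ) (hl : 1 ≤ l) (hk : k < K) :
    ∑ i ∈ Ioc k K, ζ (l + 1) i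
      = (∑ i ∈ Ioc (k + 1) K, ζ l i - ∑ i ∈ Ioc (k + 1) K, m l i) + N := by
  obtain ⟨h1, h2, h3, h4⟩ := h
  have hsplit : Ioc k K = insert K (Ioc k (K - 1)) := by
    ext x; simp only [Finset.mem_Ioc, Finset.mem_insert]; omega
  rw [hsplit, Finset.sum_insert (by simp; omega)]
  have hcong : ∀ i ∈ Ioc k (K - 1), ζ (l + 1) i = ζ l (i + 1) - m l (i + 1) := by
    intro i hi; simp only [Finset.mem_Ioc] at hi
    exact h3 l hl i (by omega) (by omega)
  rw [Finset.sum_congr rfl hcong, Finset.sum_tsub_distrib _ (by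
      intro i hi; simp only [Finset.mem_Ioc] at hi
      exact h1 l hl (i + 1) (by simp; omega)),
    Ioc_shift_aux K k hK, Ioc_shift_aux K k hK, h4 l hl]
  omega

/-- Prefix sums of EDF deliveries. -/
lemma edf_prefix (K : ℕ) (j : ℕ → ℕ) (ζE mE : ℕ → ℕ → ℕ)
    (hE : IsEDF K j ζE mE) (l : ℕ) (hl : 1 ≤ l) :
    ∀ k, k ≤ K → ∑ i ∈ Ioc 0 k, mE l i = min (j l) (∑ i ∈ Ioc 0 k, ζE l i) := by
  intro k
  induction k with
  | zero => simp
  | succ n ih =>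
    intro hn
    rw [Finset.sum_Ioc_succ_top (Nat.zero_le _), Finset.sum_Ioc_succ_top (Nat.zero_le _),
      ih (by omega)]
    have hm := hE l hl (n + 1) (by simp; omega)
    simp only [Nat.add_sub_cancel] at hm
    rw [Icc_one_eq_Ioc_zero] at hm
    omega

/-- Key invariant: every suffix sum of the EDF buffer dominates that of
any work-conserving trace with the same initial state. -/
lemma edf_suffix_dom (K N : ℕ) (hK : 1 ≤ K) (j : ℕ → ℕ)
    (ζE mE ζ m : ℕ → ℕ → ℕ)
    (hEwc : WorkConserving K N j ζE mE) (hEedf : IsEDF K j ζE mE)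
    (hwc : WorkConserving K N j ζ m)
    (hinit : ∀ i ∈ Icc 1 K, ζ 1 i = ζE 1 i) :
    ∀ l, 1 ≤ l → ∀ k, ∑ i ∈ Ioc k K, ζ l i ≤ ∑ i ∈ Ioc k K, ζE l i := by
  intro l
  induction l with
  | zero => omega
  | succ n ih =>
    intro _ k
    rcases Nat.eq_zero_or_pos n with hn | hn
    · subst hn
      apply le_of_eq
      exact Finset.sum_congr rfl fun i hi => by
        simp only [Finset.mem_Ioc] at hi
        exact hinit i (by simp; omega)
    rcases lt_or_ge k K with hk | hk
    · -- main case
      rw [wc_suffix_rec K N hK j ζ m hwc n k hn hk,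
          wc_suffix_rec K N hK j ζE mE hEwc n k hn hk]
      have hcons : ∀ (f : ℕ → ℕ),
          ∑ i ∈ Ioc 0 (k + 1), f i + ∑ i ∈ Ioc (k + 1) K, f i = ∑ i ∈ Ioc 0 K, f i :=
        fun f => Finset.sum_Ioc_consecutive f (Nat.zero_le _) hk
      have hs := hcons (ζ n)
      have hsE := hcons (ζE n)
      have hmsplit := hcons (m n)
      have hmEsplit := hcons (mE n)
      have htot : ∑ i ∈ Ioc 0 K, m n i = min (j n) (∑ i ∈ Ioc 0 K, ζ n i) := by
        rw [← Icc_one_eq_Ioc_zero, hwc.2.1 n hn, Icc_one_eq_Ioc_zero]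
      have htotE : ∑ i ∈ Ioc 0 K, mE n i = min (j n) (∑ i ∈ Ioc 0 K, ζE n i) := by
        rw [← Icc_one_eq_Ioc_zero, hEwc.2.1 n hn, Icc_one_eq_Ioc_zero]
      have hQ := edf_prefix K j ζE mE hEedf n hn (k + 1) hk
      have hP : ∑ i ∈ Ioc 0 (k + 1), m n i ≤ ∑ i ∈ Ioc 0 (k + 1), ζ n i :=
        Finset.sum_le_sum fun i hi => by
          simp only [Finset.mem_Ioc] at hi
          exact hwc.1 n hn i (by simp; omega)
      have hME : ∑ i ∈ Ioc (k + 1) K, mE n i ≤ ∑ i ∈ Ioc (k + 1) K, ζE n i :=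
        Finset.sum_le_sum fun i hi => by
          simp only [Finset.mem_Ioc] at hi
          exact hEwc.1 n hn i (by simp; omega)
      have hM : ∑ i ∈ Ioc (k + 1) K, m n i ≤ ∑ i ∈ Ioc (k + 1) K, ζ n i :=
        Finset.sum_le_sum fun i hi => by
          simp only [Finset.mem_Ioc] at hi
          exact hwc.1 n hn i (by simp; omega)
      have hf := ih hn (k + 1)
      have ht := ih hn 0
      omega
    · rw [Finset.Ioc_eq_empty (by omega)]; simp

/-- In every interval, the EDF trace delivers at least as many packets as any
work-conserving trace with the same initial state and success sequence `j`. -/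
theorem edf_delivers_most_packets
    (K N : ℕ) (hK : 1 ≤ K) (j : ℕ → ℕ)
    (ζE mE ζ m : ℕ → ℕ → ℕ)
    (hEwc : WorkConserving K N j ζE mE) (hEedf : IsEDF K j ζE mE)
    (hwc : WorkConserving K N j ζ m)
    (hinit : ∀ i ∈ Icc 1 K, ζ 1 i = ζE 1 i) :
    ∀ l, 1 ≤ l → ∑ i ∈ Icc 1 K, m l i ≤ ∑ i ∈ Icc 1 K, mE l i := by
  intro l hl
  rw [hwc.2.1 l hl, hEwc.2.1 l hl]
  have hdom := edf_suffix_dom K N hK j ζE mE ζ m hEwc hEedf hwc hinit l hl 0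
  rw [← Icc_one_eq_Ioc_zero] at hdom
  omega
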